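/- The standard link μ̃ of the weight-extended branching graph is itself a link: for every n ≥ 0 and every (z,γ) ∈ 𝔷̃_{n+1}, the sum ∑_{(z',γ')∈𝔷̃ₙ} μ̃((z,γ),(z',γ')) equals 1 (only finitely many terms are nonzero). -/

import Mathlib

open scoped BigOperators Classical ENNReal

universe u

variable {Z : ℕ → Type u}

/-- A path in the branching graph ending at the vertex `z` of level `n`:
it records vertices `z₀,…,zₙ` with `zₙ = z` and `κ(z_{k+1}, z_k) > 0` for all `k`.
(At level `0` the vertex is forced since `Z 0` is a singleton.) -/
structure BPath (κ : ∀ n, Z (n + 1) → Z n → ℝ) {n : ℕ} (z : Z n) where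
  pt : ∀ k : Fin (n + 1), Z k
  last : pt (Fin.last n) = z
  pos : ∀ k : Fin n, 0 < κ k (pt k.succ) (pt k.castSucc)

/-- `dim z`: the number of paths to `z`. -/
noncomputable def bdim (κ : ∀ n, Z (n + 1) → Z n → ℝ) {n : ℕ} (z : Z n) : ℕ :=
  Nat.card (BPath κ z)

/-- The `κ`-dimension `κ-dim(z)`. -/
noncomputable def kdim (κ : ∀ n, Z (n + 1) → Z n → ℝ) {n : ℕ} (z : Z n) : ℝ :=
  Real.sqrt (∑' p : BPath κ z, ∏ k : Fin n, (κ k (p.pt k.succ) (p.pt k.castSucc))⁻¹)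

/-- The weight `ρ(z, z')`. -/
noncomputable def wrho (κ : ∀ n, Z (n + 1) → Z n → ℝ) {n : ℕ} (z : Z (n + 1)) (z' : Z n) : ℝ :=
  kdim κ z * κ n z z' / kdim κ z'

/-- The weight group `Γ(κ)`: the subgroup of `ℝˣ` generated by the positive weights. -/
noncomputable def weightGroup (κ : ∀ n, Z (n + 1) → Z n → ℝ) : Subgroup ℝˣ :=
  Subgroup.closure
    {γ : ℝˣ | ∃ (n : ℕ) (z : Z (n + 1)) (z' : Z n), 0 < κ n z z' ∧ (γ : ℝ) = wrho κ z z'}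

/-- The multiplicity function `m̃` of the weight-extended branching graph. -/
noncomputable def mtilde (κ : ∀ n, Z (n + 1) → Z n → ℝ) {n : ℕ}
    (p : Z (n + 1) × ℝˣ) (p' : Z n × ℝˣ) : ℕ :=
  if 0 < κ n p.1 p'.1 ∧ ((p.2⁻¹ * p'.2 : ℝˣ) : ℝ) = wrho κ p.1 p'.1 then 1 else 0

/-- The standard link `μ̃` of the weight-extended branching graph. -/
noncomputable def mutilde (κ : ∀ n, Z (n + 1) → Z n → ℝ) {n : ℕ}
    (p : Z (n + 1) × ℝˣ) (p' : Z n × ℝˣ) : ℝ :=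
  (mtilde κ p p' : ℝ) * (bdim κ p'.1 : ℝ) / (bdim κ p.1 : ℝ)

def RawPath (κ : ∀ n, Z (n + 1) → Z n → ℝ) (n : ℕ) : Type u :=
  {pt : ∀ k : Fin (n + 1), Z k // ∀ k : Fin n, 0 < κ k (pt k.succ) (pt k.castSucc)}

def equivA (κ : ∀ n, Z (n + 1) → Z n → ℝ) {n : ℕ} (z : Z n) :
    BPath κ z ≃ {r : RawPath κ n // r.1 (Fin.last n) = z} where
  toFun p := ⟨⟨p.pt, p.pos⟩, p.last⟩
  invFun r := ⟨r.1.1, r.2, r.1.2⟩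
  left_inv p := by cases p; rfl
  right_inv r := rfl

def equivB (κ : ∀ n, Z (n + 1) → Z n → ℝ) {n : ℕ} (z : Z (n + 1)) :
    {r : RawPath κ (n+1) // r.1 (Fin.last (n+1)) = z} ≃
      {r : RawPath κ n // 0 < κ n z (r.1 (Fin.last n))} where
  toFun := fun ⟨⟨pt, pos⟩, hlast⟩ =>
    ⟨⟨fun k => pt k.castSucc, fun k => pos k.castSucc⟩, by
      have h2 : 0 < κ n (pt (Fin.last (n+1))) (pt ((Fin.last n).castSucc)) :=
        pos (Fin.last n)
      rwa [show pt (Fin.last (n+1)) = z from hlast] at h2⟩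
  invFun := fun ⟨⟨pt, pos⟩, h⟩ =>
    ⟨⟨Fin.snoc pt z, fun k => by
        induction k using Fin.lastCases with
        | last =>
            show 0 < κ n (Fin.snoc (α := fun k : Fin (n+2) => Z k) pt z (Fin.last (n+1)))
              (Fin.snoc (α := fun k : Fin (n+2) => Z k) pt z ((Fin.last n).castSucc))
            rw [Fin.snoc_last, Fin.snoc_castSucc]
            rwa [show pt (Fin.last n) = (⟨pt, pos⟩ : RawPath κ n).1 (Fin.last n) from rfl]
        | cast j =>
            show 0 < κ j (Fin.snoc (α := fun k : Fin (n+2) => Z k) pt z (j.succ.castSucc))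
              (Fin.snoc (α := fun k : Fin (n+2) => Z k) pt z (j.castSucc.castSucc))
            rw [Fin.snoc_castSucc, Fin.snoc_castSucc]
            exact pos j⟩, by
      show Fin.snoc (α := fun k : Fin (n+2) => Z k) pt z (Fin.last (n+1)) = z
      rw [Fin.snoc_last]⟩
  left_inv := by
    rintro ⟨⟨pt, pos⟩, hlast⟩
    apply Subtype.ext; apply Subtype.ext
    funext k
    induction k using Fin.lastCases with
    | last => simpa using hlast.symm
    | cast j => simp
  right_inv := by
    rintro ⟨⟨pt, pos⟩, h⟩
    apply Subtype.ext; apply Subtype.ext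
    funext k
    simp

def equivC (κ : ∀ n, Z (n + 1) → Z n → ℝ) {n : ℕ} (z : Z (n + 1)) :
    {r : RawPath κ n // 0 < κ n z (r.1 (Fin.last n))} ≃
      (w : {x : Z n // 0 < κ n z x}) × {r : RawPath κ n // r.1 (Fin.last n) = w.1} where
  toFun := fun ⟨r, h⟩ => ⟨⟨r.1 (Fin.last n), h⟩, ⟨r, rfl⟩⟩
  invFun := fun ⟨w, r, hr⟩ => ⟨r, hr ▸ w.2⟩
  left_inv := by rintro ⟨r, h⟩; rfl
  right_inv := by rintro ⟨⟨z', hz⟩, r, hr⟩; dsimp at hr ⊢; subst hr; rfl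

noncomputable def bpathEquiv (κ : ∀ n, Z (n + 1) → Z n → ℝ) {n : ℕ} (z : Z (n + 1)) :
    BPath κ z ≃ (w : {x : Z n // 0 < κ n z x}) × BPath κ (w : Z n) :=
  (equivA κ z).trans ((equivB κ z).trans ((equivC κ z).trans
    (Equiv.sigmaCongrRight fun w => (equivA κ w.1).symm)))

lemma BPath.ext' {κ : ∀ n, Z (n + 1) → Z n → ℝ} {n : ℕ} {z : Z n}
    {p q : BPath κ z} (h : p.pt = q.pt) : p = q := by
  cases p; cases q; cases h; rfl

lemma bpath_subsingleton_zero (κ : ∀ n, Z (n + 1) → Z n → ℝ) (z : Z 0) :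
    Subsingleton (BPath κ z) := by
  constructor
  intro p q
  apply BPath.ext'
  funext k
  have hk : k = Fin.last 0 := Fin.ext (by omega)
  subst hk
  rw [p.last, q.last]

lemma bpath_nonempty_zero (κ : ∀ n, Z (n + 1) → Z n → ℝ) (z : Z 0) :
    Nonempty (BPath κ z) := by
  refine ⟨⟨fun k => Fin.cases z (fun i => i.elim0) k, ?_, fun k => k.elim0⟩⟩
  rfl

lemma bpath_finite (κ : ∀ n, Z (n + 1) → Z n → ℝ)
    (hfin : ∀ (n : ℕ) (z : Z (n + 1)), {z' : Z n | 0 < κ n z z'}.Finite) :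
    ∀ (n : ℕ) (z : Z n), Finite (BPath κ z) := by
  intro n
  induction n with
  | zero => intro z; have := bpath_subsingleton_zero κ z; exact Finite.of_subsingleton
  | succ n ih =>
      intro z
      haveI : Finite {x : Z n // 0 < κ n z x} := (hfin n z).to_subtype
      haveI : ∀ w : {x : Z n // 0 < κ n z x}, Finite (BPath κ (w : Z n)) := fun w => ih w
      exact Finite.of_equiv _ (bpathEquiv κ z).symm

lemma bpath_nonempty (κ : ∀ n, Z (n + 1) → Z n → ℝ)
    (hκ01 : ∀ (n : ℕ) (z : Z (n + 1)) (z' : Z n), κ n z z' ∈ Set.Icc (0 : ℝ) 1)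
    (hrow : ∀ (n : ℕ) (z : Z (n + 1)), HasSum (fun z' : Z n => κ n z z') 1) :
    ∀ (n : ℕ) (z : Z n), Nonempty (BPath κ z) := by
  intro n
  induction n with
  | zero => exact bpath_nonempty_zero κ
  | succ n ih =>
      intro z
      have hex : ∃ z' : Z n, 0 < κ n z z' := by
        by_contra hc
        push_neg at hc
        have hzero : (fun z' : Z n => κ n z z') = 0 := by
          funext z'
          exact le_antisymm (hc z') (hκ01 n z z').1
        have h1 : HasSum (fun z' : Z n => κ n z z') 0 := by rw [hzero]; exact hasSum_zero
        exact one_ne_zero ((hrow n z).unique h1)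
      obtain ⟨z', hz'⟩ := hex
      exact ⟨(bpathEquiv κ z).symm ⟨⟨z', hz'⟩, (ih z').some⟩⟩

lemma bdim_pos (κ : ∀ n, Z (n + 1) → Z n → ℝ)
    (hκ01 : ∀ (n : ℕ) (z : Z (n + 1)) (z' : Z n), κ n z z' ∈ Set.Icc (0 : ℝ) 1)
    (hrow : ∀ (n : ℕ) (z : Z (n + 1)), HasSum (fun z' : Z n => κ n z z') 1)
    (hfin : ∀ (n : ℕ) (z : Z (n + 1)), {z' : Z n | 0 < κ n z z'}.Finite)
    {n : ℕ} (z : Z n) : 0 < bdim κ z := by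
  haveI := bpath_finite κ hfin n z
  haveI := bpath_nonempty κ hκ01 hrow n z
  exact Nat.card_pos

lemma bdim_rec (κ : ∀ n, Z (n + 1) → Z n → ℝ)
    (hfin : ∀ (n : ℕ) (z : Z (n + 1)), {z' : Z n | 0 < κ n z z'}.Finite)
    {n : ℕ} (z : Z (n + 1)) :
    bdim κ z = ∑ z' ∈ (hfin n z).toFinset, bdim κ z' := by
  haveI F1 : Fintype {x : Z n // 0 < κ n z x} := (hfin n z).fintype
  haveI : ∀ w : {x : Z n // 0 < κ n z x}, Finite (BPath κ (w : Z n)) :=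
    fun w => bpath_finite κ hfin n w
  unfold bdim
  rw [Nat.card_congr (bpathEquiv κ z)]
  haveI : ∀ w : {x : Z n // 0 < κ n z x}, Fintype (BPath κ (w : Z n)) :=
    fun w => Fintype.ofFinite _
  rw [Nat.card_eq_fintype_card, Fintype.card_sigma]
  rw [Finset.sum_subtype ((hfin n z).toFinset)
    (fun x => (hfin n z).mem_toFinset) (fun z' => Nat.card (BPath κ z'))]
  exact Finset.sum_congr rfl fun w _ => (Nat.card_eq_fintype_card).symm

lemma kdim_pos (κ : ∀ n, Z (n + 1) → Z n → ℝ)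
    (hκ01 : ∀ (n : ℕ) (z : Z (n + 1)) (z' : Z n), κ n z z' ∈ Set.Icc (0 : ℝ) 1)
    (hrow : ∀ (n : ℕ) (z : Z (n + 1)), HasSum (fun z' : Z n => κ n z z') 1)
    (hfin : ∀ (n : ℕ) (z : Z (n + 1)), {z' : Z n | 0 < κ n z z'}.Finite)
    {n : ℕ} (z : Z n) : 0 < kdim κ z := by
  haveI := bpath_finite κ hfin n z
  haveI := bpath_nonempty κ hκ01 hrow n z
  haveI : Fintype (BPath κ z) := Fintype.ofFinite _
  rw [kdim, tsum_fintype]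
  apply Real.sqrt_pos.mpr
  apply Finset.sum_pos
  · intro p _
    exact Finset.prod_pos fun k _ => inv_pos.mpr (p.pos k)
  · exact Finset.univ_nonempty

lemma wrho_pos (κ : ∀ n, Z (n + 1) → Z n → ℝ)
    (hκ01 : ∀ (n : ℕ) (z : Z (n + 1)) (z' : Z n), κ n z z' ∈ Set.Icc (0 : ℝ) 1)
    (hrow : ∀ (n : ℕ) (z : Z (n + 1)), HasSum (fun z' : Z n => κ n z z') 1)
    (hfin : ∀ (n : ℕ) (z : Z (n + 1)), {z' : Z n | 0 < κ n z z'}.Finite)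
    {n : ℕ} {z : Z (n + 1)} {z' : Z n} (h : 0 < κ n z z') : 0 < wrho κ z z' :=
  div_pos (mul_pos (kdim_pos κ hκ01 hrow hfin z) h) (kdim_pos κ hκ01 hrow hfin z')

theorem stmt4     [∀ n, Countable (Z n)] [Unique (Z 0)]
    (κ : ∀ n, Z (n + 1) → Z n → ℝ)
    (hκ01 : ∀ (n : ℕ) (z : Z (n + 1)) (z' : Z n), κ n z z' ∈ Set.Icc (0 : ℝ) 1)
    (hrow : ∀ (n : ℕ) (z : Z (n + 1)), HasSum (fun z' : Z n => κ n z z') 1)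
    (hsupp : ∀ (n : ℕ) (z' : Z n), ∃ z : Z (n + 1), 0 < κ n z z')
    (hfin : ∀ (n : ℕ) (z : Z (n + 1)), {z' : Z n | 0 < κ n z z'}.Finite)
    (n : ℕ) (z : Z (n + 1)) (γ : ↥(weightGroup κ)) :
    HasSum
      (fun p' : Z n × ↥(weightGroup κ) => mutilde κ (z, (γ : ℝˣ)) (p'.1, (p'.2 : ℝˣ))) 1 := by
  classical
  set F : Z n × ↥(weightGroup κ) → ℝ :=
    fun p' => mutilde κ (z, (γ : ℝˣ)) (p'.1, (p'.2 : ℝˣ)) with hF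
  have hδex : ∀ z' : Z n, 0 < κ n z z' → ∃ δ : ↥(weightGroup κ),
      (((γ : ℝˣ)⁻¹ * (δ : ℝˣ) : ℝˣ) : ℝ) = wrho κ z z' := by
    intro z' h
    refine ⟨⟨(γ : ℝˣ) * Units.mk0 (wrho κ z z')
      (ne_of_gt (wrho_pos κ hκ01 hrow hfin h)),
      mul_mem γ.2 (Subgroup.subset_closure ⟨n, z, z', h, rfl⟩)⟩, ?_⟩
    rw [inv_mul_cancel_left]
    rfl
  choose δ hδval using hδex
  have huniq : ∀ (z' : Z n) (h : 0 < κ n z z') (δ' : ↥(weightGroup κ)),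
      (((γ : ℝˣ)⁻¹ * (δ' : ℝˣ) : ℝˣ) : ℝ) = wrho κ z z' → δ' = δ z' h := by
    intro z' h δ' hval
    have h2 : ((γ : ℝˣ)⁻¹ * (δ' : ℝˣ) : ℝˣ) = ((γ : ℝˣ)⁻¹ * ((δ z' h : ℝˣ)) : ℝˣ) :=
      Units.ext (by rw [hval, hδval z' h])
    exact Subtype.ext (mul_left_cancel h2)
  set s : Finset (Z n) := (hfin n z).toFinset with hs
  set S : Finset (Z n × ↥(weightGroup κ)) :=
    s.attach.image (fun w => (w.1, δ w.1 ((hfin n z).mem_toFinset.mp w.2))) with hS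
  have hFzero : ∀ p ∉ S, F p = 0 := by
    intro p hp
    by_cases hcond : 0 < κ n z p.1 ∧
        (((γ : ℝˣ)⁻¹ * (p.2 : ℝˣ) : ℝˣ) : ℝ) = wrho κ z p.1
    · exfalso
      apply hp
      rw [hS]
      apply Finset.mem_image.mpr
      refine ⟨⟨p.1, (hfin n z).mem_toFinset.mpr hcond.1⟩, Finset.mem_attach _ _, ?_⟩
      exact Prod.ext rfl (huniq p.1 hcond.1 p.2 hcond.2).symm
    · have h0 : mtilde κ (z, (γ : ℝˣ)) (p.1, (p.2 : ℝˣ)) = 0 := if_neg hcond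
      simp [hF, mutilde, h0]
  have hsum : ∑ p ∈ S, F p = 1 := by
    rw [hS, Finset.sum_image (by
      intro x _ y _ hxy
      exact Subtype.ext (congrArg Prod.fst hxy))]
    have hterm : ∀ w : {x // x ∈ s},
        F (w.1, δ w.1 ((hfin n z).mem_toFinset.mp w.2)) =
          (bdim κ w.1 : ℝ) / (bdim κ z : ℝ) := by
      intro w
      have h := (hfin n z).mem_toFinset.mp w.2
      rw [hF]
      simp only [mutilde, mtilde]
      rw [if_pos ⟨h, hδval w.1 h⟩]
      push_cast
      ring
    rw [Finset.sum_congr rfl fun w _ => hterm w]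
    rw [Finset.sum_attach s (fun z' => (bdim κ z' : ℝ) / (bdim κ z : ℝ))]
    rw [← Finset.sum_div, ← Nat.cast_sum, hs, ← bdim_rec κ hfin z, div_self]
    exact_mod_cast (bdim_pos κ hκ01 hrow hfin z).ne'
  have : HasSum F (∑ p ∈ S, F p) := hasSum_sum_of_ne_finset_zero hFzero
  rwa [hsum] at this
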